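/- arXiv:1210.6005 — 4 statements merged into one kernel-verified Lean document; each statement's English description precedes it below -/
import Mathlib

section
/- Let H be a complex Hilbert space and let A, K : H → H be continuous linear operators such that A, A + i·I, and A + K + i·I are all invertible with continuous inverses. If A⁻¹ ∘ K ∘ A⁻¹ is a compact operator, then (A + K + i·I)⁻¹ − (A + i·I)⁻¹ is a compact operator. -/
open MeasureTheory

/-- Compactness propagation for resolvent differences: if `A`, `A + i` and `A + K + i`
are invertible and `A⁻¹ K A⁻¹` is compact, then `(A+K+i)⁻¹ − (A+i)⁻¹` is compact. -/
theorem resolvent_difference_compact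
    {H : Type*} [NormedAddCommGroup H] [InnerProductSpace ℂ H] [CompleteSpace H]
    (A K : H →L[ℂ] H)
    (hA : IsUnit A)
    (hAi : IsUnit (A + Complex.I • (1 : H →L[ℂ] H)))
    (hAKi : IsUnit (A + K + Complex.I • (1 : H →L[ℂ] H)))
    (hcmp : IsCompactOperator ⇑(Ring.inverse A * K * Ring.inverse A)) :
    IsCompactOperator
      ⇑(Ring.inverse (A + K + Complex.I • (1 : H →L[ℂ] H))
        - Ring.inverse (A + Complex.I • (1 : H →L[ℂ] H))) := by
  set i : H →L[ℂ] H := Complex.I • (1 : H →L[ℂ] H)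
  set B : H →L[ℂ] H := Ring.inverse A * K * Ring.inverse A with hB
  set R₁ : H →L[ℂ] H := Ring.inverse (A + i)
  set R₂ : H →L[ℂ] H := Ring.inverse (A + K + i)
  have hK : K = A * B * A := by
    rw [hB]
    rw [mul_assoc (Ring.inverse A) K, ← mul_assoc A, Ring.mul_inverse_cancel A hA, one_mul,
      mul_assoc, Ring.inverse_mul_cancel A hA, mul_one]
  have key : R₂ - R₁ = -(R₂ * (A * B * A) * R₁) := by
    rw [← hK]
    have h1 : R₂ * (A + K + i) = 1 := Ring.inverse_mul_cancel _ hAKi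
    have h2 : (A + i) * R₁ = 1 := Ring.mul_inverse_cancel _ hAi
    have : R₂ - R₁ = R₂ * ((A + i) - (A + K + i)) * R₁ := by
      rw [mul_sub, sub_mul, mul_assoc R₂ (A + i) R₁, h2, mul_one, h1, one_mul]
    rw [this]
    have : (A + i) - (A + K + i) = -K := by abel
    rw [this]
    noncomm_ring
  rw [key]
  have : ⇑(-(R₂ * (A * B * A) * R₁)) = -((⇑(R₂ * A)) ∘ ⇑B ∘ ⇑(A * R₁)) := by
    ext x
    simp [ContinuousLinearMap.mul_apply, Function.comp]
  rw [this]
  exact (((hcmp.comp_clm (A * R₁)).continuous_comp (R₂ * A).continuous)).neg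
end

section
/- Let c > 0, let α : ℝ → ℝ be continuously differentiable with α(ξ) ≥ 0 for all ξ, α(ξ) → +∞ as ξ → ±∞, and ∫_ℝ |α'(ξ)|/(c + α(ξ))² dξ < ∞. Then for every x ≠ 0 the limit K(x) := lim_{R→∞} ∫_{−R}^{R} e^{2πiξx}/(c + α(ξ)) dξ exists, and |K(x)| ≤ (1/(2π|x|)) ∫_ℝ |α'(ξ)|/(c + α(ξ))² dξ. -/
/-!
Integration by parts against `e(ξ) = exp (2πixξ) / (2πix)`, a primitive of the oscillating factor:
with `f = 1 / (c + α)`, the boundary terms `f e` vanish at `±∞` because `f → 0` and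
`|e| = 1 / (2π|x|)`, and what is left is `-∫ f' e`, absolutely convergent since
`|f'| = |α'| / (c + α)²`.
-/

open MeasureTheory Real Filter intervalIntegral

open scoped Topology

theorem tendsto_intervalIntegral_mul_deriv_of_tendsto_mul_zero
    {A : Type*} [NormedRing A] [NormedAlgebra ℝ A] [CompleteSpace A] {u v u' v' : ℝ → A}
    {ι : Type*} {l : Filter ι} [l.IsCountablyGenerated] {a b : ι → ℝ}
    (hu : ∀ x, HasDerivAt u (u' x) x) (hv : ∀ x, HasDerivAt v (v' x) x)
    (hu' : ∀ a b, IntervalIntegrable u' volume a b) (hv' : ∀ a b, IntervalIntegrable v' volume a b)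
    (hbot : Tendsto (fun x => u x * v x) atBot (𝓝 0))
    (htop : Tendsto (fun x => u x * v x) atTop (𝓝 0))
    (hint : Integrable fun x => u' x * v x)
    (ha : Tendsto a l atBot) (hb : Tendsto b l atTop) :
    Tendsto (fun i => ∫ x in a i..b i, u x * v' x) l (𝓝 (-∫ x, u' x * v x)) := by
  have hparts : ∀ i, ∫ x in a i..b i, u x * v' x
      = u (b i) * v (b i) - u (a i) * v (a i) - ∫ x in a i..b i, u' x * v x := fun i =>
    integral_mul_deriv_eq_deriv_mul (fun x _ => hu x) (fun x _ => hv x) (hu' _ _) (hv' _ _)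
  simp_rw [hparts]
  simpa using ((htop.comp hb).sub (hbot.comp ha)).sub (intervalIntegral_tendsto_integral hint ha hb)

section

open Complex

theorem norm_cexp_mul_I_div (t ξ : ℝ) : ‖exp (t * ξ * I) / (t * I)‖ = |t|⁻¹ := by
  simp [norm_exp]

theorem hasDerivAt_cexp_mul_I_div {t : ℝ} (ht : t ≠ 0) (ξ : ℝ) :
    HasDerivAt (fun ξ : ℝ => exp (t * ξ * I) / (t * I)) (exp (t * ξ * I)) ξ := by
  have htI : (t : ℂ) * I ≠ 0 := by simp [ht]
  have h := (((hasDerivAt_id ξ).ofReal_comp.const_mul (t : ℂ)).mul_const I).cexp.div_const (t * I)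
  simpa only [id, ofReal_one, mul_one, mul_div_assoc, div_self htI] using h

theorem tendsto_intervalIntegral_mul_cexp_mul_I {f f' : ℝ → ℂ} (hf : ∀ ξ, HasDerivAt f (f' ξ) ξ)
    (hf'c : Continuous f') (hf' : Integrable f')
    (hbot : Tendsto f atBot (𝓝 0)) (htop : Tendsto f atTop (𝓝 0)) {t : ℝ} (ht : t ≠ 0) :
    Tendsto (fun R => ∫ ξ in -R..R, f ξ * exp (t * ξ * I)) atTop
      (𝓝 (-∫ ξ, f' ξ * (exp (t * ξ * I) / (t * I)))) := by
  have hexp : Continuous fun ξ : ℝ => exp (t * ξ * I) := by fun_prop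
  have hbdd : ∀ l : Filter ℝ, IsBoundedUnder (· ≤ ·) l fun ξ => ‖exp (t * ξ * I) / (t * I)‖ := by
    intro l; simp_rw [norm_cexp_mul_I_div]; exact isBoundedUnder_const
  refine tendsto_intervalIntegral_mul_deriv_of_tendsto_mul_zero hf (hasDerivAt_cexp_mul_I_div ht)
    (fun _ _ => hf'c.intervalIntegrable _ _) (fun _ _ => hexp.intervalIntegrable _ _)
    (hbot.zero_mul_isBoundedUnder_le (hbdd _)) (htop.zero_mul_isBoundedUnder_le (hbdd _)) ?_
    tendsto_neg_atTop_atBot tendsto_id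
  exact hf'.mul_bdd (by fun_prop) (Eventually.of_forall fun ξ => (norm_cexp_mul_I_div t ξ).le)

theorem norm_integral_mul_cexp_mul_I_div_le (g : ℝ → ℂ) (t : ℝ) :
    ‖∫ ξ, g ξ * (exp (t * ξ * I) / (t * I))‖ ≤ |t|⁻¹ * ∫ ξ, ‖g ξ‖ :=
  calc ‖∫ ξ, g ξ * (exp (t * ξ * I) / (t * I))‖
      ≤ ∫ ξ, ‖g ξ * (exp (t * ξ * I) / (t * I))‖ := norm_integral_le_integral_norm _
    _ = |t|⁻¹ * ∫ ξ, ‖g ξ‖ := by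
      simp_rw [norm_mul, norm_cexp_mul_I_div]; rw [MeasureTheory.integral_mul_const, mul_comm]

end

/-- Kernel decay estimate of Proposition 5.3: the kernel `K(x)` of `(𝒞 + c)⁻¹` exists as an
improper Fourier-type integral for `x ≠ 0` and satisfies
`|K(x)| ≤ (2π|x|)⁻¹ ∫ |α'(ξ)|/(c+α(ξ))² dξ`. -/
theorem kernel_decay_estimate
    (c : ℝ) (hc : 0 < c) (α : ℝ → ℝ) (hα : ContDiff ℝ 1 α)
    (hpos : ∀ ξ : ℝ, 0 ≤ α ξ)
    (htop : Tendsto α atTop atTop)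
    (hbot : Tendsto α atBot atTop)
    (hint : Integrable (fun ξ : ℝ => |deriv α ξ| / (c + α ξ) ^ 2))
    (x : ℝ) (hx : x ≠ 0) :
    ∃ K : ℂ,
      Tendsto (fun R : ℝ => ∫ ξ in (-R)..R,
          Complex.exp (2 * (π : ℂ) * Complex.I * (ξ : ℂ) * (x : ℂ)) / ((c + α ξ : ℝ) : ℂ))
        atTop (nhds K) ∧
      ‖K‖ ≤ (1 / (2 * π * |x|)) * ∫ ξ : ℝ, |deriv α ξ| / (c + α ξ) ^ 2 := by
  have hca : ∀ ξ, 0 < c + α ξ := fun ξ => by linarith [hpos ξ]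
  set f : ℝ → ℂ := fun ξ => ((c + α ξ)⁻¹ : ℝ)
  set f' : ℝ → ℂ := fun ξ => (-deriv α ξ / (c + α ξ) ^ 2 : ℝ)
  have hf : ∀ ξ, HasDerivAt f (f' ξ) ξ := fun ξ =>
    (((hα.differentiable one_ne_zero ξ).hasDerivAt.const_add c).inv (hca ξ).ne').ofReal_comp
  have hf'c : Continuous f' := by
    have hα' := hα.continuous_deriv le_rfl
    have hα₀ := hα.continuous
    exact Complex.continuous_ofReal.comp <| by
      fun_prop (disch := exact fun ξ => pow_ne_zero 2 (hca ξ).ne')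
  have hnorm : ∀ ξ, ‖f' ξ‖ = |deriv α ξ| / (c + α ξ) ^ 2 := fun ξ => by
    simp only [f', Complex.norm_real, Real.norm_eq_abs, abs_div, abs_neg, abs_pow,
      abs_of_pos (hca ξ)]
  have hf'int : Integrable f' :=
    hint.mono' hf'c.aestronglyMeasurable (Eventually.of_forall fun ξ => (hnorm ξ).le)
  have hf0 : ∀ l, Tendsto α l atTop → Tendsto f l (𝓝 0) := fun l h => by
    simpa [f] using (tendsto_atTop_add_const_left l c h).inv_tendsto_atTop.ofReal
  refine ⟨_, (tendsto_intervalIntegral_mul_cexp_mul_I hf hf'c hf'int (hf0 _ hbot) (hf0 _ htop)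
    (t := 2 * π * x) (by positivity)).congr fun R => ?_, ?_⟩
  · refine integral_congr fun ξ _ => ?_
    simp only [f]
    push_cast
    ring_nf
  · simpa [hnorm, abs_mul, abs_of_pos pi_pos] using
      norm_integral_mul_cexp_mul_I_div_le f' (2 * π * x)
end

section
/- Let s > 0, let p ≥ 1 be a natural number, and let Q : ℝ → ℝ be integrable and square-integrable with ∫_ℝ (2π|ξ|)^s |Q̂(ξ)| dξ < ∞ and with Q^{p+2} integrable, satisfying pointwise the equation (|∂ₓ|^s Q)(x) + Q(x) − Q(x)^{p+1} = 0. For c > 1 define U_c(x) := (c−1)^{1/p} Q( ((c−1)/c)^{1/s} x ), and suppose U_c², U_c^{p+2}, and (|∂ₓ|^s U_c)·U_c are integrable. Then ∫_ℝ ( U_c(x) + (|∂ₓ|^s U_c)(x) ) U_c(x) dx = (c−1)^{2/p − 1/s} c^{1/s − 1} ∫_ℝ Q² dx + (c−1)^{1 + 2/p − 1/s} c^{1/s − 1} ∫_ℝ Q^{p+2} dx. -/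
/-!
The rescaled profile `U = A · Q(B ·)` with `A^p = c - 1` and `B^s = (c - 1)/c` solves the
traveling-wave equation `c |∂ₓ|^s U + (c - 1) U - U^{p+1} = 0`, because `|∂ₓ|^s` commutes with
dilations up to the factor `B^s`. Multiplying that equation by `U` gives pointwise
`(U + |∂ₓ|^s U) U = (U² + U^{p+2}) / c`, and the dilation by `B` rescales both integrals by `B⁻¹`.
-/

open MeasureTheory Real

/-- The Fourier transform `f̂(ξ) = ∫ f(x) e^{−2πixξ} dx`. -/
noncomputable def fourierT (f : ℝ → ℂ) (ξ : ℝ) : ℂ :=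
  ∫ x : ℝ, f x * Complex.exp (-(2 * (π : ℂ) * Complex.I * (x : ℂ) * (ξ : ℂ)))

/-- The fractional derivative `(|∂ₓ|^s f)(x) = ∫ (2π|ξ|)^s f̂(ξ) e^{2πixξ} dξ`. -/
noncomputable def fracDeriv (s : ℝ) (f : ℝ → ℂ) (x : ℝ) : ℂ :=
  ∫ ξ : ℝ, (((2 * π * |ξ|) ^ s : ℝ) : ℂ) * fourierT f ξ
      * Complex.exp (2 * (π : ℂ) * Complex.I * (x : ℂ) * (ξ : ℂ))

theorem fourierT_const_mul (a : ℂ) (f : ℝ → ℂ) (ξ : ℝ) :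
    fourierT (fun x => a * f x) ξ = a * fourierT f ξ := by
  simp only [fourierT, mul_assoc, integral_const_mul]

theorem fracDeriv_const_mul (s : ℝ) (a : ℂ) (f : ℝ → ℂ) (x : ℝ) :
    fracDeriv s (fun y => a * f y) x = a * fracDeriv s f x := by
  simp only [fracDeriv, fourierT_const_mul, ← integral_const_mul]
  congr 1 with ξ
  ring

theorem fourierT_comp_mul_left (f : ℝ → ℂ) {B : ℝ} (hB : 0 < B) (ξ : ℝ) :
    fourierT (fun x => f (B * x)) ξ = (B⁻¹ : ℂ) * fourierT f (ξ / B) := by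
  have h := Measure.integral_comp_mul_left
    (fun y : ℝ => f y * Complex.exp (-(2 * π * Complex.I * y * ((ξ / B : ℝ) : ℂ)))) B
  rw [abs_of_pos (inv_pos.2 hB), Complex.real_smul] at h
  have hB' : (B : ℂ) ≠ 0 := by exact_mod_cast hB.ne'
  rw [fourierT, fourierT, ← Complex.ofReal_inv, ← h]
  congr 1 with x
  push_cast
  field_simp

theorem fracDeriv_comp_mul_left (s : ℝ) (f : ℝ → ℂ) {B : ℝ} (hB : 0 < B) (x : ℝ) :
    fracDeriv s (fun y => f (B * y)) x = (B ^ s : ℝ) * fracDeriv s f (B * x) := by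
  set g : ℝ → ℂ := fun η => (((2 * π * |η|) ^ s : ℝ) : ℂ) * fourierT f η
      * Complex.exp (2 * π * Complex.I * ((B * x : ℝ) : ℂ) * η)
  have h := Measure.integral_comp_div g B
  rw [abs_of_pos hB, Complex.real_smul] at h
  have hg : ∀ ξ : ℝ, (((2 * π * |ξ|) ^ s : ℝ) : ℂ) * fourierT (fun y => f (B * y)) ξ
      * Complex.exp (2 * π * Complex.I * x * ξ) = (B ^ s * B⁻¹ : ℝ) * g (ξ / B) := by
    intro ξ
    have hB' : (B : ℂ) ≠ 0 := by exact_mod_cast hB.ne'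
    have hpow : (2 * π * |ξ|) ^ s = B ^ s * (2 * π * |ξ / B|) ^ s := by
      rw [← mul_rpow hB.le (by positivity), abs_div, abs_of_pos hB]
      field_simp
    simp only [g, fourierT_comp_mul_left f hB, hpow]
    push_cast
    field_simp
  rw [fracDeriv, fracDeriv, integral_congr_ae (Filter.Eventually.of_forall hg),
    integral_const_mul, h, ← mul_assoc, ← Complex.ofReal_mul, mul_assoc, inv_mul_cancel₀ hB.ne',
    mul_one]

def IsTravelingWave (s c : ℝ) (p : ℕ) (U : ℝ → ℝ) : Prop :=
  ∀ x, c * fracDeriv s (fun y => (U y : ℂ)) x + (c - 1) * (U x : ℂ) - (U x : ℂ) ^ (p + 1) = 0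

theorem isTravelingWave_const_mul_comp_mul_left {s : ℝ} {p : ℕ} {Q : ℝ → ℝ}
    (hQ : ∀ x, fracDeriv s (fun y => (Q y : ℂ)) x + Q x - (Q x : ℂ) ^ (p + 1) = 0)
    {A B c : ℝ} (hB : 0 < B) (hc : c ≠ 0) (hA : A ^ p = c - 1) (hBs : B ^ s = (c - 1) / c) :
    IsTravelingWave s c p (fun y => A * Q (B * y)) := by
  intro x
  have hc' : (c : ℂ) ≠ 0 := by exact_mod_cast hc
  have hA' : (A : ℂ) ^ p = c - 1 := by exact_mod_cast hA
  simp only [Complex.ofReal_mul, fracDeriv_const_mul]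
  rw [fracDeriv_comp_mul_left s (fun z => (Q z : ℂ)) hB x, hBs]
  push_cast
  field_simp
  linear_combination (c - 1) * (A : ℂ) * hQ (B * x) - (Q (B * x) : ℂ) ^ (p + 1) * A * hA'

theorem IsTravelingWave.integral_add_fracDeriv_mul_self {s c : ℝ} {p : ℕ} {U : ℝ → ℝ}
    (hU : IsTravelingWave s c p U) (hc : c ≠ 0) (hU2 : Integrable (fun x => U x ^ 2))
    (hUp : Integrable (fun x => U x ^ (p + 2))) :
    ∫ x, ((U x : ℂ) + fracDeriv s (fun y => (U y : ℂ)) x) * U x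
      = (((∫ x, U x ^ 2) + ∫ x, U x ^ (p + 2)) / c : ℝ) := by
  have hc' : (c : ℂ) ≠ 0 := by exact_mod_cast hc
  have hpt : ∀ x, ((U x : ℂ) + fracDeriv s (fun y => (U y : ℂ)) x) * U x
      = ((U x ^ 2 + U x ^ (p + 2)) / c : ℝ) := by
    intro x
    push_cast
    field_simp
    linear_combination (U x : ℂ) * hU x
  simp only [hpt]
  rw [integral_complex_ofReal, integral_div, integral_add hU2 hUp]

theorem integrable_pow_const_mul_comp_mul_left {Q : ℝ → ℝ} {n : ℕ}
    (hQ : Integrable (fun x => Q x ^ n)) (A : ℝ) {B : ℝ} (hB : B ≠ 0) :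
    Integrable (fun x => (A * Q (B * x)) ^ n) := by
  simpa only [mul_pow] using (hQ.comp_mul_left' hB).const_mul (A ^ n)

theorem integral_pow_const_mul_comp_mul_left (Q : ℝ → ℝ) (n : ℕ) (A : ℝ) {B : ℝ} (hB : 0 < B) :
    ∫ x, (A * Q (B * x)) ^ n = A ^ n * B⁻¹ * ∫ x, Q x ^ n := by
  simp only [mul_pow, integral_const_mul, Measure.integral_comp_mul_left (fun y => Q y ^ n),
    abs_of_pos (inv_pos.2 hB), smul_eq_mul, mul_assoc]

theorem bbm_momentum_coeff_eq {s c : ℝ} (hc : 1 < c) (p : ℕ) :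
    ((c - 1) ^ ((1 : ℝ) / p)) ^ 2 * (((c - 1) / c) ^ ((1 : ℝ) / s))⁻¹ / c
      = (c - 1) ^ (2 / (p : ℝ) - 1 / s) * c ^ (1 / s - 1) := by
  have hc0 : 0 < c := by linarith
  have hc1 : 0 < c - 1 := by linarith
  rw [← rpow_natCast, ← rpow_mul hc1.le, div_rpow hc1.le hc0.le, rpow_sub hc1, rpow_sub hc0,
    rpow_one]
  push_cast
  field_simp

theorem fractional_bbm_momentum_general
    (s : ℝ) (hs : 0 < s) (p : ℕ) (hp : 1 ≤ p) (Q : ℝ → ℝ)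
    (hQ2 : MemLp Q 2 (volume : Measure ℝ))
    (hQp2 : Integrable (fun x : ℝ => Q x ^ (p + 2)))
    (hgs : ∀ x : ℝ,
      fracDeriv s (fun y : ℝ => (Q y : ℂ)) x + (Q x : ℂ) - (Q x : ℂ) ^ (p + 1) = 0)
    (c : ℝ) (hc : 1 < c) (U : ℝ → ℝ)
    (hU : U = fun x : ℝ => (c - 1) ^ ((1 : ℝ) / p) * Q (((c - 1) / c) ^ ((1 : ℝ) / s) * x)) :
    (∫ x : ℝ, ((U x : ℂ) + fracDeriv s (fun y : ℝ => (U y : ℂ)) x) * (U x : ℂ))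
      = (((c - 1) ^ (2 / (p : ℝ) - 1 / s) * c ^ (1 / s - 1) * ∫ x : ℝ, Q x ^ 2 : ℝ) : ℂ)
        + (((c - 1) ^ (1 + 2 / (p : ℝ) - 1 / s) * c ^ (1 / s - 1)
            * ∫ x : ℝ, Q x ^ (p + 2) : ℝ) : ℂ) := by
  subst hU
  have hc1 : 0 < c - 1 := by linarith
  have hcoeff := bbm_momentum_coeff_eq (s := s) hc p
  set A := (c - 1) ^ ((1 : ℝ) / p)
  set B := ((c - 1) / c) ^ ((1 : ℝ) / s)
  have hB : 0 < B := by positivity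
  have hAp : A ^ p = c - 1 := by
    rw [show A = (c - 1) ^ ((p : ℝ)⁻¹) by rw [← one_div], rpow_inv_natCast_pow hc1.le (by omega)]
  have hBs : B ^ s = (c - 1) / c := by
    rw [← rpow_mul (by positivity), one_div_mul_cancel hs.ne', rpow_one]
  have hcoeff' : A ^ (p + 2) * B⁻¹ / c
      = (c - 1) ^ (1 + 2 / (p : ℝ) - 1 / s) * c ^ (1 / s - 1) := by
    rw [pow_add, hAp, add_sub_assoc, rpow_add hc1, rpow_one]
    linear_combination (c - 1) * hcoeff
  have hwave := isTravelingWave_const_mul_comp_mul_left hgs hB (by positivity) hAp hBs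
  rw [hwave.integral_add_fracDeriv_mul_self (by positivity)
      (integrable_pow_const_mul_comp_mul_left hQ2.integrable_sq A hB.ne')
      (integrable_pow_const_mul_comp_mul_left hQp2 A hB.ne'),
    integral_pow_const_mul_comp_mul_left _ _ _ hB, integral_pow_const_mul_comp_mul_left _ _ _ hB,
    ← Complex.ofReal_add, ← hcoeff, ← hcoeff']
  congr 1
  ring

/-- The momentum computation of Section 6.1:
`⟨(I + |∂ₓ|^s) U_c, U_c⟩ = (c−1)^{2/p−1/s} c^{1/s−1} ⟨Q,Q⟩ + (c−1)^{1+2/p−1/s} c^{1/s−1} ⟨Q^{p+1},Q⟩`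
for the fractional BBM traveling wave `U_c(x) = (c−1)^{1/p} Q(((c−1)/c)^{1/s} x)`. -/
theorem fractional_bbm_momentum
    (s : ℝ) (hs : 0 < s) (p : ℕ) (hp : 1 ≤ p) (Q : ℝ → ℝ)
    (hQ1 : Integrable Q) (hQ2 : MemLp Q 2 (volume : Measure ℝ))
    (hQhat : Integrable (fun ξ : ℝ =>
      (2 * π * |ξ|) ^ s * ‖fourierT (fun x : ℝ => (Q x : ℂ)) ξ‖))
    (hQp2 : Integrable (fun x : ℝ => Q x ^ (p + 2)))
    (hgs : ∀ x : ℝ,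
      fracDeriv s (fun y : ℝ => (Q y : ℂ)) x + (Q x : ℂ) - (Q x : ℂ) ^ (p + 1) = 0)
    (c : ℝ) (hc : 1 < c) (U : ℝ → ℝ)
    (hU : U = fun x : ℝ => (c - 1) ^ ((1 : ℝ) / p) * Q (((c - 1) / c) ^ ((1 : ℝ) / s) * x))
    (hU2 : Integrable (fun x : ℝ => U x ^ 2))
    (hUp2 : Integrable (fun x : ℝ => U x ^ (p + 2)))
    (hUfrac : Integrable (fun x : ℝ => fracDeriv s (fun y : ℝ => (U y : ℂ)) x * (U x : ℂ))) :
    (∫ x : ℝ, ((U x : ℂ) + fracDeriv s (fun y : ℝ => (U y : ℂ)) x) * (U x : ℂ))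
      = (((c - 1) ^ (2 / (p : ℝ) - 1 / s) * c ^ (1 / s - 1) * ∫ x : ℝ, Q x ^ 2 : ℝ) : ℂ)
        + (((c - 1) ^ (1 + 2 / (p : ℝ) - 1 / s) * c ^ (1 / s - 1)
            * ∫ x : ℝ, Q x ^ (p + 2) : ℝ) : ℂ) :=
  fractional_bbm_momentum_general s hs p hp Q hQ2 hQp2 hgs c hc U hU
end

section
/- Let s > 0, let p ≥ 1 be a natural number, and let Q : ℝ → ℝ be integrable and square-integrable with ∫_ℝ (2π|ξ|)^s |Q̂(ξ)| dξ < ∞ and with Q^{p+2} integrable, satisfying pointwise the equation (|∂ₓ|^s Q)(x) + Q(x) − Q(x)^{p+1} = 0. Then ∫_ℝ Q(x)^{p+2} dx = ∫_ℝ Q(x)² dx + ∫_ℝ (2π|ξ|)^s |Q̂(ξ)|² dξ. -/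
open MeasureTheory Real

/-!
Pair the ground-state equation with `Q`. By Fubini (the integrand is dominated by
`|Q(x)| (2π|ξ|)^s |Q̂(ξ)|`), `∫ Q · |∂ₓ|^s Q = ∫ (2π|ξ|)^s Q̂(ξ) (∫ Q(x) e^{2πixξ} dx) dξ`, and for
real `Q` the inner integral is `conj Q̂(ξ)`, so the pairing is `∫ (2π|ξ|)^s |Q̂(ξ)|² dξ`.
-/

open scoped FourierTransform in
lemma fourierT_eq_fourier (f : ℝ → ℂ) : fourierT f = 𝓕 f := by
  funext ξ
  rw [Real.fourier_real_eq_integral_exp_smul, fourierT]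
  congr 1
  funext x
  rw [smul_eq_mul, mul_comm]
  push_cast
  ring_nf

lemma continuous_fourierT {f : ℝ → ℂ} (hf : Integrable f) : Continuous (fourierT f) := by
  rw [fourierT_eq_fourier]
  exact VectorFourier.fourierIntegral_continuous Real.continuous_fourierChar
    (innerSL ℝ).continuous₂ hf

lemma norm_exp_two_pi_I_mul (x ξ : ℝ) :
    ‖Complex.exp (2 * (π : ℂ) * Complex.I * (x : ℂ) * (ξ : ℂ))‖ = 1 := by
  rw [show 2 * (π : ℂ) * Complex.I * x * ξ = ((2 * π * x * ξ : ℝ) : ℂ) * Complex.I by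
    push_cast; ring]
  exact Complex.norm_exp_ofReal_mul_I _

lemma integral_conj_mul_exp_eq_conj_fourierT (f : ℝ → ℂ) (ξ : ℝ) :
    ∫ x : ℝ, (starRingEnd ℂ) (f x) * Complex.exp (2 * (π : ℂ) * Complex.I * (x : ℂ) * (ξ : ℂ))
      = (starRingEnd ℂ) (fourierT f ξ) := by
  rw [fourierT, ← integral_conj]
  congr 1
  funext x
  rw [map_mul, ← Complex.exp_conj]
  simp only [map_neg, map_mul, Complex.conj_I, Complex.conj_ofReal, map_ofNat]
  ring_nf

lemma integral_conj_mul_fracDeriv (s : ℝ) {f : ℝ → ℂ} (hf : Integrable f)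
    (hf_hat : Integrable fun ξ : ℝ => (2 * π * |ξ|) ^ s * ‖fourierT f ξ‖) :
    ∫ x : ℝ, (starRingEnd ℂ) (f x) * fracDeriv s f x
      = ((∫ ξ : ℝ, (2 * π * |ξ|) ^ s * ‖fourierT f ξ‖ ^ 2 : ℝ) : ℂ) := by
  set m : ℝ → ℝ := fun ξ => (2 * π * |ξ|) ^ s
  set e : ℝ → ℝ → ℂ := fun x ξ => Complex.exp (2 * (π : ℂ) * Complex.I * (x : ℂ) * (ξ : ℂ))
  have hm_nonneg (ξ : ℝ) : 0 ≤ m ξ := by positivity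
  have hΦ : Integrable (Function.uncurry fun x ξ =>
      (starRingEnd ℂ) (f x) * ((m ξ : ℂ) * fourierT f ξ * e x ξ)) (volume.prod volume) := by
    refine (hf.norm.mul_prod hf_hat).mono' ?_ (.of_forall fun z => le_of_eq ?_)
    · have hm : Measurable m := by fun_prop
      refine (hf.aestronglyMeasurable.star.comp_fst).mul
        ((((Complex.measurable_ofReal.comp hm).aestronglyMeasurable.mul
          (continuous_fourierT hf).aestronglyMeasurable).comp_snd).mul
        (Continuous.aestronglyMeasurable ?_))
      fun_prop
    · rw [Function.uncurry_apply_pair, norm_mul, norm_mul, norm_mul, RCLike.norm_conj,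
        norm_exp_two_pi_I_mul, Complex.norm_real, norm_of_nonneg (hm_nonneg z.2), mul_one]
  calc ∫ x : ℝ, (starRingEnd ℂ) (f x) * fracDeriv s f x
      = ∫ x : ℝ, ∫ ξ : ℝ, (starRingEnd ℂ) (f x) * ((m ξ : ℂ) * fourierT f ξ * e x ξ) := by
        congr 1
        funext x
        rw [fracDeriv, ← integral_const_mul]
    _ = ∫ ξ : ℝ, ∫ x : ℝ, (starRingEnd ℂ) (f x) * ((m ξ : ℂ) * fourierT f ξ * e x ξ) :=
        integral_integral_swap hΦ
    _ = ∫ ξ : ℝ, ((m ξ * ‖fourierT f ξ‖ ^ 2 : ℝ) : ℂ) := by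
        congr 1
        funext ξ
        have hpull : ∫ x : ℝ, (starRingEnd ℂ) (f x) * ((m ξ : ℂ) * fourierT f ξ * e x ξ)
            = (m ξ : ℂ) * fourierT f ξ * ∫ x : ℝ, (starRingEnd ℂ) (f x) * e x ξ := by
          rw [← integral_const_mul]
          congr 1
          funext x
          ring
        rw [hpull, integral_conj_mul_exp_eq_conj_fourierT, mul_assoc, Complex.mul_conj']
        push_cast
        ring
    _ = _ := integral_complex_ofReal

theorem ground_state_pairing_general
    (s : ℝ) (p : ℕ) (Q : ℝ → ℝ)
    (hQ1 : Integrable Q) (hQ2 : MemLp Q 2 (volume : Measure ℝ))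
    (hQhat : Integrable (fun ξ : ℝ =>
      (2 * π * |ξ|) ^ s * ‖fourierT (fun x : ℝ => (Q x : ℂ)) ξ‖))
    (hQp2 : Integrable (fun x : ℝ => Q x ^ (p + 2)))
    (hgs : ∀ x : ℝ,
      fracDeriv s (fun y : ℝ => (Q y : ℂ)) x + (Q x : ℂ) - (Q x : ℂ) ^ (p + 1) = 0) :
    (∫ x : ℝ, Q x ^ (p + 2))
      = (∫ x : ℝ, Q x ^ 2)
        + ∫ ξ : ℝ, (2 * π * |ξ|) ^ s * ‖fourierT (fun x : ℝ => (Q x : ℂ)) ξ‖ ^ 2 := by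
  have hpairing := integral_conj_mul_fracDeriv s (f := fun x => (Q x : ℂ)) hQ1.ofReal hQhat
  have hpointwise (x : ℝ) : (starRingEnd ℂ) (Q x) * fracDeriv s (fun y => (Q y : ℂ)) x
      = ((Q x ^ (p + 2) - Q x ^ 2 : ℝ) : ℂ) := by
    rw [Complex.conj_ofReal, eq_sub_of_add_eq (sub_eq_zero.mp (hgs x))]
    push_cast
    ring
  have hcomplex : (((∫ x : ℝ, Q x ^ (p + 2)) - ∫ x : ℝ, Q x ^ 2 : ℝ) : ℂ)
      = ((∫ ξ : ℝ, (2 * π * |ξ|) ^ s * ‖fourierT (fun x : ℝ => (Q x : ℂ)) ξ‖ ^ 2 : ℝ) : ℂ) := by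
    rw [← hpairing, ← integral_sub hQp2 hQ2.integrable_sq, ← integral_complex_ofReal]
    exact integral_congr_ae (.of_forall fun x => (hpointwise x).symm)
  linarith [Complex.ofReal_injective hcomplex]

/-- Pairing the ground-state equation `|∂ₓ|^s Q + Q − Q^{p+1} = 0` with `Q` yields
`⟨Q^{p+1},Q⟩ = ⟨Q,Q⟩ + ∫ (2π|ξ|)^s |Q̂(ξ)|² dξ` (the last term being
`⟨|∂ₓ|^{s/2}Q, |∂ₓ|^{s/2}Q⟩` by Parseval). -/
theorem ground_state_pairing
    (s : ℝ) (hs : 0 < s) (p : ℕ) (hp : 1 ≤ p) (Q : ℝ → ℝ)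
    (hQ1 : Integrable Q) (hQ2 : MemLp Q 2 (volume : Measure ℝ))
    (hQhat : Integrable (fun ξ : ℝ =>
      (2 * π * |ξ|) ^ s * ‖fourierT (fun x : ℝ => (Q x : ℂ)) ξ‖))
    (hQp2 : Integrable (fun x : ℝ => Q x ^ (p + 2)))
    (hgs : ∀ x : ℝ,
      fracDeriv s (fun y : ℝ => (Q y : ℂ)) x + (Q x : ℂ) - (Q x : ℂ) ^ (p + 1) = 0) :
    (∫ x : ℝ, Q x ^ (p + 2))
      = (∫ x : ℝ, Q x ^ 2)
        + ∫ ξ : ℝ, (2 * π * |ξ|) ^ s * ‖fourierT (fun x : ℝ => (Q x : ℂ)) ξ‖ ^ 2 :=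
  ground_state_pairing_general s p Q hQ1 hQ2 hQhat hQp2 hgs
end
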